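/- The state ρ₆₆ is not separable; together with the positivity of its partial transpose, ρ₆₆ is a PPT entangled state. -/

import Mathlib

open Matrix ComplexOrder

noncomputable def N66 : Matrix (Fin 9) (Fin 9) ℂ :=
  !![1, 0, 0, 0, 0, 0, 0, 0, -1;
     0, 2, 0, -1, 0, 0, 0, 0, 0;
     0, 0, 1, 0, 0, 0, 1, 0, 0;
     0, -1, 0, 1, 0, 0, 0, 0, 1;
     0, 0, 0, 0, 1, 0, 1, 0, 0;
     0, 0, 0, 0, 0, 1, 0, -1, 0;
     0, 0, 1, 0, 1, 0, 2, 0, 0;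
     0, 0, 0, 0, 0, -1, 0, 1, 0;
     -1, 0, 0, 1, 0, 0, 0, 0, 3]

/-- The index map `(i, j) ↦ 3 i + j` from `Fin 3 × Fin 3` to `Fin 9`. -/
def idx (p : Fin 3 × Fin 3) : Fin 9 :=
  ⟨3 * p.1.val + p.2.val, by have h1 := p.1.isLt; have h2 := p.2.isLt; omega⟩

/-- The state `ρ₆₆`, viewed as an operator on `ℂ³ ⊗ ℂ³`. -/
noncomputable def rho66 : Matrix (Fin 3 × Fin 3) (Fin 3 × Fin 3) ℂ :=
  fun p q => (1 / 13 : ℂ) * N66 (idx p) (idx q)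

/-- The partial transpose on the second factor: `(ρ^{T_B})_{(i,j),(k,l)} = ρ_{(i,l),(k,j)}`. -/
noncomputable def ptrans (ρ : Matrix (Fin 3 × Fin 3) (Fin 3 × Fin 3) ℂ) :
    Matrix (Fin 3 × Fin 3) (Fin 3 × Fin 3) ℂ :=
  fun p q => ρ (p.1, q.2) (q.1, p.2)

/-- The product vector `a ⊗ b ∈ ℂ³ ⊗ ℂ³`, with `(i,j)`-th component `a i * b j`. -/
def prodVec (a b : Fin 3 → ℂ) : Fin 3 × Fin 3 → ℂ := fun p => a p.1 * b p.2

/-- A matrix on `ℂ³ ⊗ ℂ³` is separable if it is a finite sum of outer products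
`w w†` of product vectors `w = a ⊗ b`. -/
noncomputable def IsSeparableState (ρ : Matrix (Fin 3 × Fin 3) (Fin 3 × Fin 3) ℂ) : Prop :=
  ∃ (k : ℕ) (a b : Fin k → Fin 3 → ℂ),
    ρ = ∑ i : Fin k,
      Matrix.vecMulVec (prodVec (a i) (b i)) (fun q => starRingEnd ℂ (prodVec (a i) (b i) q))

/-!
Range criterion: if `ρ = ∑ᵢ (aᵢ ⊗ bᵢ)(aᵢ ⊗ bᵢ)†`, then `ρ^Γ = ∑ᵢ (aᵢ ⊗ b̄ᵢ)(aᵢ ⊗ b̄ᵢ)†`, so each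
`aᵢ ⊗ bᵢ` is orthogonal to `ker ρ` and each `aᵢ ⊗ b̄ᵢ` to `ker ρ^Γ`. Writing both quadratic forms
of `ρ₆₆` and `ρ₆₆^Γ` as sums of squares proves positivity and exhibits three real kernel vectors
of each. The six resulting equations, bilinear in `(a, b)` and `(ā, b)`, force `a ⊗ b = 0`, so a
separable decomposition of `ρ₆₆ ≠ 0` cannot exist.
-/

open ComplexConjugate

theorem star_dotProduct_eq_zero_of_sum_vecMulVec {𝕜 ι n : Type*} [RCLike 𝕜] [Fintype ι]
    [Fintype n] (w : ι → n → 𝕜) {v : n → 𝕜}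
    (hv : star v ⬝ᵥ (∑ i, vecMulVec (w i) (star (w i))) *ᵥ v = 0) (i : ι) :
    star v ⬝ᵥ w i = 0 := by
  have hterm (j : ι) :
      star v ⬝ᵥ vecMulVec (w j) (star (w j)) *ᵥ v = ((‖star v ⬝ᵥ w j‖ ^ 2 : ℝ) : 𝕜) := by
    rw [vecMulVec_mulVec, op_smul_eq_smul, dotProduct_smul, smul_eq_mul,
      star_dotProduct (w j) v, RCLike.star_def, RCLike.conj_mul]
    push_cast
    rfl
  simp only [sum_mulVec, dotProduct_sum, hterm] at hv
  norm_cast at hv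
  simpa using (Finset.sum_eq_zero_iff_of_nonneg fun j _ => by positivity).mp hv i
    (Finset.mem_univ i)

theorem Matrix.IsHermitian.ptrans {ρ : Matrix (Fin 3 × Fin 3) (Fin 3 × Fin 3) ℂ}
    (h : ρ.IsHermitian) : (ptrans ρ).IsHermitian := by
  ext p q
  exact h.apply (p.1, q.2) (q.1, p.2)

theorem ptrans_sum {ι : Type*} (s : Finset ι)
    (M : ι → Matrix (Fin 3 × Fin 3) (Fin 3 × Fin 3) ℂ) :
    ptrans (∑ i ∈ s, M i) = ∑ i ∈ s, ptrans (M i) := by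
  ext p q
  simp [ptrans, Matrix.sum_apply]

theorem ptrans_vecMulVec_prodVec (a b : Fin 3 → ℂ) :
    ptrans (vecMulVec (prodVec a b) (star (prodVec a b))) =
      vecMulVec (prodVec a (star b)) (star (prodVec a (star b))) := by
  ext p q
  simp only [ptrans, vecMulVec_apply, prodVec, Pi.star_apply, star_mul', star_star]
  ring

theorem rho66_isHermitian : rho66.IsHermitian := by
  have hN : N66ᴴ = N66 := by
    ext i j
    fin_cases i <;> fin_cases j <;> simp [N66]
  ext p q
  simp only [rho66, conjTranspose_apply, star_mul']
  rw [← conjTranspose_apply N66, hN]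
  norm_num

theorem rho66_quadForm (x : Fin 3 × Fin 3 → ℂ) :
    star x ⬝ᵥ rho66 *ᵥ x =
      ((2 * ‖x (0,0) - x (2,2)‖ ^ 2 + ‖2 * x (0,1) - x (1,0)‖ ^ 2
        + 2 * ‖x (0,2) + x (2,0)‖ ^ 2 + ‖x (1,0) + 2 * x (2,2)‖ ^ 2
        + 2 * ‖x (1,1) + x (2,0)‖ ^ 2 + 2 * ‖x (1,2) - x (2,1)‖ ^ 2) / 26 : ℝ) := by
  push_cast [← Complex.mul_conj']
  simp [dotProduct, mulVec, Fintype.sum_prod_type, Fin.sum_univ_three, rho66, N66, idx,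
    Complex.conj_ofNat]
  ring

theorem ptrans_rho66_quadForm (x : Fin 3 × Fin 3 → ℂ) :
    star x ⬝ᵥ ptrans rho66 *ᵥ x =
      ((‖x (0,0) - x (1,1) + x (2,2)‖ ^ 2 + 2 * ‖x (0,1)‖ ^ 2
        + ‖x (0,2) - x (2,0)‖ ^ 2 + ‖x (1,0) + x (2,1)‖ ^ 2
        + ‖x (1,2) + x (2,0)‖ ^ 2 + 2 * ‖x (2,2)‖ ^ 2) / 13 : ℝ) := by
  push_cast [← Complex.mul_conj']
  simp [dotProduct, mulVec, Fintype.sum_prod_type, Fin.sum_univ_three, rho66, ptrans, N66, idx]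
  ring

theorem rho66_posSemidef : rho66.PosSemidef :=
  .of_dotProduct_mulVec_nonneg rho66_isHermitian fun x => by
    rw [rho66_quadForm, Complex.zero_le_real]
    positivity

theorem ptrans_rho66_posSemidef : (ptrans rho66).PosSemidef :=
  .of_dotProduct_mulVec_nonneg rho66_isHermitian.ptrans fun x => by
    rw [ptrans_rho66_quadForm, Complex.zero_le_real]
    positivity

theorem eq_zero_of_quartics {K : Type*} [Field K] [CharZero K] {p q : K}
    (h₁ : 2 * p ^ 4 - 2 * p ^ 3 * q + q ^ 4 = 0) (h₂ : 8 * p ^ 4 - 3 * p * q ^ 3 + q ^ 4 = 0) :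
    q = 0 := by
  by_contra hq
  have hp : p ≠ 0 := by
    rintro rfl
    exact hq (pow_eq_zero_iff four_ne_zero |>.mp (by simpa using h₁))
  have h₃ : 8 * p ^ 3 - 3 * p * q ^ 2 - 3 * q ^ 3 = 0 :=
    (mul_eq_zero_iff_right hq).mp (by linear_combination -4 * h₁ + h₂)
  have h₄ : 3 * p ^ 2 + q ^ 2 = 0 :=
    (mul_eq_zero_iff_right (pow_ne_zero 2 hq)).mp (by linear_combination h₂ - p * h₃)
  have h₅ : 17 * p + 9 * q = 0 :=
    (mul_eq_zero_iff_right (pow_ne_zero 2 hp)).mp (by linear_combination h₃ + 3 * (p + q) * h₄)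
  have : (532 : K) * q ^ 2 = 0 := by linear_combination 289 * h₄ - 3 * (17 * p - 9 * q) * h₅
  simp [hq] at this

/-- `a ⊗ b` is orthogonal to three kernel vectors of `ρ₆₆` and `a ⊗ b̄` to three kernel vectors
of `ρ₆₆^Γ` (those listed in `of_eq_sum`); the last three equations are conjugated so that all six
are linear in `b`. -/
structure IsRho66RangeProduct (a b : Fin 3 → ℂ) : Prop where
  ker₁ : a 2 * b 0 - a 0 * b 2 - a 1 * b 1 = 0
  ker₂ : a 1 * b 2 + a 2 * b 1 = 0
  ker₃ : a 0 * b 0 - a 0 * b 1 - 2 * a 1 * b 0 + a 2 * b 2 = 0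
  ptransKer₁ : conj (a 0) * b 0 + conj (a 1) * b 1 = 0
  ptransKer₂ : (conj (a 0) - conj (a 1)) * b 2 + conj (a 2) * b 0 = 0
  ptransKer₃ : conj (a 2) * b 1 - conj (a 1) * b 0 = 0

namespace IsRho66RangeProduct

theorem of_eq_sum {k : ℕ} {a b : Fin k → Fin 3 → ℂ}
    (hρ : rho66 = ∑ i, vecMulVec (prodVec (a i) (b i)) (star (prodVec (a i) (b i))))
    (i : Fin k) : IsRho66RangeProduct (a i) (b i) := by
  have hker (v) (hv : star v ⬝ᵥ rho66 *ᵥ v = 0) : star v ⬝ᵥ prodVec (a i) (b i) = 0 :=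
    star_dotProduct_eq_zero_of_sum_vecMulVec _ (hρ ▸ hv) i
  have hptransKer (v) (hv : star v ⬝ᵥ ptrans rho66 *ᵥ v = 0) :
      star v ⬝ᵥ prodVec (a i) (star (b i)) = 0 := by
    simp only [hρ, ptrans_sum, ptrans_vecMulVec_prodVec] at hv
    exact star_dotProduct_eq_zero_of_sum_vecMulVec _ hv i
  have h₁ := hker (Function.uncurry ![![0, 0, -1], ![0, -1, 0], ![1, 0, 0]])
    (by rw [rho66_quadForm]; simp [Matrix.cons_val])
  have h₂ := hker (Function.uncurry ![![0, 0, 0], ![0, 0, 1], ![0, 1, 0]])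
    (by rw [rho66_quadForm]; simp [Matrix.cons_val])
  have h₃ := hker (Function.uncurry ![![1, -1, 0], ![-2, 0, 0], ![0, 0, 1]])
    (by rw [rho66_quadForm]; simp [Matrix.cons_val])
  have h₄ := hptransKer (Function.uncurry ![![1, 0, 0], ![0, 1, 0], ![0, 0, 0]])
    (by rw [ptrans_rho66_quadForm]; simp [Matrix.cons_val])
  have h₅ := hptransKer (Function.uncurry ![![0, 0, 1], ![0, 0, -1], ![1, 0, 0]])
    (by rw [ptrans_rho66_quadForm]; simp [Matrix.cons_val])
  have h₆ := hptransKer (Function.uncurry ![![0, 0, 0], ![-1, 0, 0], ![0, 1, 0]])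
    (by rw [ptrans_rho66_quadForm]; simp [Matrix.cons_val])
  replace h₄ := congrArg star h₄
  replace h₅ := congrArg star h₅
  replace h₆ := congrArg star h₆
  simp [dotProduct, Fintype.sum_prod_type, Fin.sum_univ_three, prodVec, Function.uncurry,
    Complex.conj_ofNat] at h₁ h₂ h₃ h₄ h₅ h₆
  constructor
  · linear_combination h₁
  · linear_combination h₂
  · linear_combination h₃
  · linear_combination h₄
  · linear_combination h₅
  · linear_combination h₆

variable {a b : Fin 3 → ℂ}

theorem eq_zero_or_eq_zero_of_apply_one_eq_zero (h : IsRho66RangeProduct a b) (ha₁ : a 1 = 0) :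
    a = 0 ∨ b = 0 := by
  have h₁ := h.ker₁; have h₂ := h.ker₂; have h₃ := h.ker₃; have h₄ := h.ptransKer₁
  simp only [ha₁, map_zero, zero_mul, mul_zero, add_zero, sub_zero, zero_add] at h₁ h₂ h₃ h₄
  by_cases ha₀ : a 0 = 0
  · by_cases ha₂ : a 2 = 0
    · left; ext i; fin_cases i <;> assumption
    right
    ext i; fin_cases i
    · simpa [ha₀, ha₂] using h₁
    · simpa [ha₂] using h₂
    · simpa [ha₀, ha₂] using h₃
  · have hb₀ : b 0 = 0 := by simpa [ha₀] using h₄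
    have hb₂ : b 2 = 0 := by simpa [ha₀, hb₀] using h₁
    have hb₁ : b 1 = 0 := by simpa [ha₀, hb₀, hb₂] using h₃
    right
    ext i; fin_cases i <;> assumption

/-- With `p, q, r = ā₀, ā₁, ā₂`, dividing by `b₀ ≠ 0` eliminates `b` and leaves, after
conjugating, two quartic forms in `p, q` that have no common zero with `q ≠ 0`. -/
theorem apply_zero_eq_zero (h : IsRho66RangeProduct a b) (ha₁ : a 1 ≠ 0) : b 0 = 0 := by
  by_contra hb₀
  obtain ⟨E₁, E₂, E₃, G₁, G₂, G₃⟩ := h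
  set p := conj (a 0)
  set q := conj (a 1)
  set r := conj (a 2)
  have hq : q ≠ 0 := (map_ne_zero _).mpr ha₁
  have hdet : p * r + q ^ 2 = 0 :=
    (mul_eq_zero_iff_right hb₀).mp (by linear_combination r * G₁ - q * G₃)
  have hdet_conj : a 0 * a 2 + a 1 ^ 2 = 0 := by simpa [p, q, r] using congrArg conj hdet
  have hrel : q * a 2 + 2 * a 1 * p = 0 :=
    (mul_eq_zero_iff_right (mul_ne_zero ha₁ hb₀)).mp (by
      linear_combination (q * a 1) * E₁ + (q * a 0) * E₂ - (q * b 1) * hdet_conj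
        + (2 * a 1 ^ 2) * G₁)
  have hrel_conj : a 1 * r + 2 * q * a 0 = 0 := by
    simpa [p, q, r, Complex.conj_ofNat] using congrArg conj hrel
  have hnorm : 2 * p * a 0 - q * a 1 = 0 :=
    (mul_eq_zero_iff_right hq).mp (by linear_combination p * hrel_conj - a 1 * hdet)
  have hb₂b₀ : q * a 1 * b 2 - a 2 * p * b 0 = 0 := by linear_combination q * E₂ - a 2 * G₁
  have hG₂ : (p - q) * a 2 * p + a 1 * q * r = 0 :=
    (mul_eq_zero_iff_right hb₀).mp (by linear_combination (a 1 * q) * G₂ - (p - q) * hb₂b₀)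
  have hE₃ : a 0 * a 1 * q + a 0 * a 1 * p - 2 * a 1 ^ 2 * q + a 2 ^ 2 * p = 0 :=
    (mul_eq_zero_iff_right hb₀).mp (by
      linear_combination (a 1 * q) * E₃ + (a 0 * a 1) * G₁ - a 2 * hb₂b₀)
  have hquartic₁ : 2 * p ^ 4 - 2 * p ^ 3 * q + q ^ 4 = 0 :=
    (mul_eq_zero_iff_right (mul_ne_zero ha₁ hq)).mp (by
      linear_combination -(p * q ^ 2) * hG₂ + (p ^ 2 * q * (p - q)) * hrel
        + (p * q ^ 3) * hrel_conj - q ^ 4 * hnorm)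
  have hquartic₂ : 8 * p ^ 4 - 3 * p * q ^ 3 + q ^ 4 = 0 :=
    (mul_eq_zero_iff_right (pow_ne_zero 2 ha₁)).mp (by
      linear_combination (2 * p * q ^ 2) * hE₃ - (2 * p) * (p * q * a 2 - 2 * a 1 * p ^ 2) * hrel
        - (a 1 * q ^ 3 + a 1 * p * q ^ 2) * hnorm)
  exact hq (eq_zero_of_quartics hquartic₁ hquartic₂)

theorem eq_zero_or_eq_zero (h : IsRho66RangeProduct a b) : a = 0 ∨ b = 0 := by
  by_cases ha₁ : a 1 = 0
  · exact h.eq_zero_or_eq_zero_of_apply_one_eq_zero ha₁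
  have hb₀ := h.apply_zero_eq_zero ha₁
  have hb₁ : b 1 = 0 := by simpa [hb₀, ha₁] using h.ptransKer₁
  have hb₂ : b 2 = 0 := by simpa [hb₁, ha₁] using h.ker₂
  right
  ext i; fin_cases i <;> assumption

end IsRho66RangeProduct

/-- `ρ₆₆` is a PPT entangled state: it is positive semidefinite,
its partial transpose is positive semidefinite, and it is not separable. -/
theorem rho66_ppt_entangled :
    rho66.PosSemidef ∧ (ptrans rho66).PosSemidef ∧ ¬ IsSeparableState rho66 := by
  refine ⟨rho66_posSemidef, ptrans_rho66_posSemidef, ?_⟩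
  rintro ⟨k, a, b, hρ⟩
  have hzero (i : Fin k) : prodVec (a i) (b i) = 0 := by
    rcases (IsRho66RangeProduct.of_eq_sum hρ i).eq_zero_or_eq_zero with h | h <;>
      ext <;> simp [prodVec, h]
  have h00 : rho66 (0, 0) (0, 0) = 0 := by simp [hρ, hzero]
  norm_num [rho66, N66, idx] at h00
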